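/- Let a ∈ ℝ ∪ {−∞}, b, d ∈ ℝ ∪ {+∞} and c ∈ ℝ, with a < b and c < d. Then the k-vector space Hom(k_{(a,b)}, k_{[c,d)}) is one-dimensional over k if c < b ≤ d, and is zero otherwise. -/

import Mathlib

open CategoryTheory TopologicalSpace Set Topology

noncomputable section

variable (k : Type) [Field k]

/-- The support of the function `s : V ∩ I → k` is closed in `V`. -/
def SuppClosedIn (I V : Set ℝ) (s : ↥(V ∩ I) → k) : Prop :=
  ∀ x ∈ V, x ∈ closure {y : ℝ | ∃ h : y ∈ V ∩ I, s ⟨y, h⟩ ≠ 0} →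
    ∃ h : x ∈ V ∩ I, s ⟨x, h⟩ ≠ 0

lemma zero_locConst (I V : Set ℝ) :
    IsLocallyConstant (0 : ↥(V ∩ I) → k) ∧ SuppClosedIn k I V 0 := by
  constructor
  · exact IsLocallyConstant.const 0
  · intro x _ hx
    exfalso
    have h0 : {y : ℝ | ∃ h : y ∈ V ∩ I, (0 : ↥(V ∩ I) → k) ⟨y, h⟩ ≠ 0} = ∅ := by
      ext y; simp
    rw [h0, closure_empty] at hx
    exact hx

/-- The sections over `V` of the sheaf `k_I`: locally constant functions on `V ∩ I`
whose support is closed in `V`. -/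
def secSub (I V : Set ℝ) : Submodule k (↥(V ∩ I) → k) where
  carrier := {s | IsLocallyConstant s ∧ SuppClosedIn k I V s}
  zero_mem' := zero_locConst k I V
  add_mem' := by
    rintro s t ⟨hslc, hscl⟩ ⟨htlc, htcl⟩
    have hlc : IsLocallyConstant (s + t) := hslc.comp₂ htlc (· + ·)
    refine ⟨hlc, ?_⟩
    intro x hxV hxcl
    have hsub : {y : ℝ | ∃ h : y ∈ V ∩ I, (s + t) ⟨y, h⟩ ≠ 0}
        ⊆ {y : ℝ | ∃ h : y ∈ V ∩ I, s ⟨y, h⟩ ≠ 0}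
          ∪ {y : ℝ | ∃ h : y ∈ V ∩ I, t ⟨y, h⟩ ≠ 0} := by
      rintro y ⟨h, hy⟩
      by_cases hsy : s ⟨y, h⟩ = 0
      · refine Or.inr ⟨h, fun h0 => hy ?_⟩
        show s ⟨y, h⟩ + t ⟨y, h⟩ = 0
        rw [hsy, h0, add_zero]
      · exact Or.inl ⟨h, hsy⟩
    have hxVI : x ∈ V ∩ I := by
      have hcl2 := closure_mono hsub hxcl
      rw [closure_union] at hcl2
      rcases hcl2 with h | h
      · exact (hscl x hxV h).choose
      · exact (htcl x hxV h).choose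
    refine ⟨hxVI, ?_⟩
    have hA : IsClosed {y : ↥(V ∩ I) | (s + t) y ≠ 0} := by
      have h1 : IsOpen ((s + t) ⁻¹' {0}) := hlc {0}
      have h2 := h1.isClosed_compl
      have h3 : ((s + t) ⁻¹' {0})ᶜ = {y : ↥(V ∩ I) | (s + t) y ≠ 0} := by
        ext y; simp
      exact h3 ▸ h2
    have hmem : (⟨x, hxVI⟩ : ↥(V ∩ I)) ∈ closure {y : ↥(V ∩ I) | (s + t) y ≠ 0} := by
      rw [closure_subtype]
      have himg : Subtype.val '' {y : ↥(V ∩ I) | (s + t) y ≠ 0}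
          = {y : ℝ | ∃ h : y ∈ V ∩ I, (s + t) ⟨y, h⟩ ≠ 0} := by
        ext y
        constructor
        · rintro ⟨z, hz, rfl⟩; exact ⟨z.2, hz⟩
        · rintro ⟨h, hy⟩; exact ⟨⟨y, h⟩, hy, rfl⟩
      rw [himg]
      exact hxcl
    have := hA.closure_eq ▸ hmem
    exact this
  smul_mem' := by
    intro c s hs
    rcases hs with ⟨hlc, hcl⟩
    by_cases hc : c = 0
    · subst hc
      rw [zero_smul]
      exact zero_locConst k I V
    · constructor
      · exact hlc.comp (fun a => c • a)
      · intro x hxV hxcl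
        have hset : {y : ℝ | ∃ h : y ∈ V ∩ I, (c • s) ⟨y, h⟩ ≠ 0}
            = {y : ℝ | ∃ h : y ∈ V ∩ I, s ⟨y, h⟩ ≠ 0} := by
          ext y
          constructor
          · rintro ⟨h, hy⟩
            refine ⟨h, fun h0 => hy ?_⟩
            show c • s ⟨y, h⟩ = 0
            rw [h0, smul_zero]
          · rintro ⟨h, hy⟩
            exact ⟨h, by simpa [smul_eq_zero, hc] using hy⟩
        rw [hset] at hxcl
        obtain ⟨h, hy⟩ := hcl x hxV hxcl
        exact ⟨h, by simpa [smul_eq_zero, hc] using hy⟩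
/-- Restriction of sections. -/
def resFun (I : Set ℝ) {V W : Set ℝ} (h : W ⊆ V) (s : ↥(V ∩ I) → k) : ↥(W ∩ I) → k :=
  fun y => s ⟨y.1, ⟨h y.2.1, y.2.2⟩⟩

lemma resFun_mem (I : Set ℝ) {V W : Set ℝ} (h : W ⊆ V) (s : ↥(V ∩ I) → k)
    (hs : s ∈ secSub k I V) : resFun k I h s ∈ secSub k I W := by
  obtain ⟨hlc, hcl⟩ := hs
  constructor
  · exact hlc.comp_continuous (Continuous.subtype_mk continuous_subtype_val _)
  · intro x hxW hxcl
    have hsub : {y : ℝ | ∃ h' : y ∈ W ∩ I, resFun k I h s ⟨y, h'⟩ ≠ 0}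
        ⊆ {y : ℝ | ∃ h' : y ∈ V ∩ I, s ⟨y, h'⟩ ≠ 0} := by
      rintro y ⟨h', hy⟩
      exact ⟨⟨h h'.1, h'.2⟩, hy⟩
    obtain ⟨hxVI, hne⟩ := hcl x (h hxW) (closure_mono hsub hxcl)
    exact ⟨⟨hxW, hxVI.2⟩, hne⟩

/-- Restriction as a linear map. -/
def resLM (I : Set ℝ) {V W : Set ℝ} (h : W ⊆ V) : secSub k I V →ₗ[k] secSub k I W where
  toFun s := ⟨resFun k I h s.1, resFun_mem k I h s.1 s.2⟩
  map_add' s t := rfl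
  map_smul' c s := rfl

/-- The presheaf `k_I` on `ℝ`. -/
def intervalPresheaf (I : Set ℝ) : TopCat.Presheaf (ModuleCat.{0} k) (TopCat.of ℝ) where
  obj V := ModuleCat.of k (secSub k I V.unop.1)
  map {V W} f := ModuleCat.ofHom (resLM k I (leOfHom f.unop))
  map_id V := rfl
  map_comp f g := rfl
theorem intervalPresheaf_isSheaf (I : Set ℝ) : (intervalPresheaf k I).IsSheaf := by
  classical
  rw [TopCat.Presheaf.isSheaf_iff_isSheafUniqueGluing]
  rintro ι U (sf : ∀ i, ↥(secSub k I (U i).1)) hcomp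
  -- pointwise compatibility
  have key : ∀ (i j : ι) (x : ℝ) (hxi : x ∈ (U i).1 ∩ I) (hxj : x ∈ (U j).1 ∩ I),
      (sf i).1 ⟨x, hxi⟩ = (sf j).1 ⟨x, hxj⟩ := by
    intro i j x hxi hxj
    have h := hcomp i j
    have hmem : x ∈ (U i ⊓ U j).1 ∩ I := ⟨⟨hxi.1, hxj.1⟩, hxi.2⟩
    have h2 := congrFun (congrArg Subtype.val h) ⟨x, hmem⟩
    exact h2
  have hmemS : ∀ x : ↥((iSup U : Opens (TopCat.of ℝ)).1 ∩ I), ∃ i, x.1 ∈ U i := by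
    intro x
    exact Opens.mem_iSup.mp x.2.1
  set idx : ↥((iSup U : Opens (TopCat.of ℝ)).1 ∩ I) → ι := fun x => (hmemS x).choose with hidxdef
  have hidx : ∀ x, x.1 ∈ U (idx x) := fun x => (hmemS x).choose_spec
  set s₀ : ↥((iSup U : Opens (TopCat.of ℝ)).1 ∩ I) → k :=
    fun x => (sf (idx x)).1 ⟨x.1, ⟨hidx x, x.2.2⟩⟩ with hs₀def
  have hs₀ : ∀ (x : ↥((iSup U : Opens (TopCat.of ℝ)).1 ∩ I)) (i : ι) (hx : x.1 ∈ U i),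
      s₀ x = (sf i).1 ⟨x.1, ⟨hx, x.2.2⟩⟩ :=
    fun x i hx => key (idx x) i x.1 ⟨hidx x, x.2.2⟩ ⟨hx, x.2.2⟩
  have hlc : IsLocallyConstant s₀ := by
    rw [IsLocallyConstant.iff_exists_open]
    intro x
    obtain ⟨i, hi⟩ := hmemS x
    have hlci : IsLocallyConstant ((sf i).1 : ↥((U i).1 ∩ I) → k) := (sf i).2.1
    obtain ⟨W, hWopen, hpW, hWconst⟩ := hlci.exists_open (⟨x.1, ⟨hi, x.2.2⟩⟩ : ↥((U i).1 ∩ I))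
    obtain ⟨O, hOopen, hWO⟩ := isOpen_induced_iff.mp hWopen
    subst hWO
    refine ⟨Subtype.val ⁻¹' (O ∩ (U i).1), (hOopen.inter (U i).2).preimage continuous_subtype_val,
      ⟨hpW, hi⟩, ?_⟩
    intro y hy
    have hyi : y.1 ∈ U i := hy.2
    rw [hs₀ y i hyi, hs₀ x i hi]
    exact hWconst ⟨y.1, ⟨hyi, y.2.2⟩⟩ hy.1
  have hscl : SuppClosedIn k I (iSup U : Opens (TopCat.of ℝ)).1 s₀ := by
    intro x hxS hxcl
    obtain ⟨i, hi⟩ := Opens.mem_iSup.mp hxS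
    have h1 : x ∈ closure ({y : ℝ | ∃ h : y ∈ (iSup U : Opens (TopCat.of ℝ)).1 ∩ I, s₀ ⟨y, h⟩ ≠ 0}
        ∩ (U i).1) := by
      rw [mem_closure_iff] at hxcl ⊢
      intro O hO hxO
      obtain ⟨z, hz⟩ := hxcl (O ∩ (U i).1) (hO.inter (U i).2) ⟨hxO, hi⟩
      exact ⟨z, hz.1.1, hz.2, hz.1.2⟩
    have hsub : {y : ℝ | ∃ h : y ∈ (iSup U : Opens (TopCat.of ℝ)).1 ∩ I, s₀ ⟨y, h⟩ ≠ 0}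
        ∩ (U i).1 ⊆ {y : ℝ | ∃ h : y ∈ (U i).1 ∩ I, (sf i).1 ⟨y, h⟩ ≠ 0} := by
      rintro y ⟨⟨hy, hne⟩, hyi⟩
      refine ⟨⟨hyi, hy.2⟩, ?_⟩
      rw [← hs₀ ⟨y, hy⟩ i hyi]
      exact hne
    obtain ⟨hyUI, hne⟩ := (sf i).2.2 x hi (closure_mono hsub h1)
    refine ⟨⟨hxS, hyUI.2⟩, ?_⟩
    rw [hs₀ ⟨x, ⟨hxS, hyUI.2⟩⟩ i hyUI.1]
    exact hne
  refine ⟨⟨s₀, hlc, hscl⟩, ?_, ?_⟩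
  · intro i
    apply Subtype.ext
    funext y
    exact hs₀ ⟨y.1, ⟨leOfHom (Opens.leSupr U i) y.2.1, y.2.2⟩⟩ i y.2.1
  · intro t ht
    apply Subtype.ext
    funext x
    have h := ht (idx x)
    have h2 := congrFun (congrArg Subtype.val h) ⟨x.1, ⟨hidx x, x.2.2⟩⟩
    exact h2

/-- The sheaf `k_I` on `ℝ` for an interval `I`: locally constant functions on `V ∩ I`
whose support is closed in `V`. -/
def intervalSheaf (I : Set ℝ) :
    Sheaf (Opens.grothendieckTopology (TopCat.of ℝ)) (ModuleCat.{0} k) :=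
  ⟨intervalPresheaf k I, intervalPresheaf_isSheaf k I⟩
/-- The category of sheaves of `k`-vector spaces on `ℝ`. -/
abbrev RealSheafCat := Sheaf (Opens.grothendieckTopology (TopCat.of ℝ)) (ModuleCat.{0} k)

instance sheafHomSMul (F G : RealSheafCat k) : SMul k (F ⟶ G) :=
  ⟨fun c f => ⟨c • f.hom⟩⟩

instance sheafHomModule (F G : RealSheafCat k) : Module k (F ⟶ G) :=
  Function.Injective.module k
    { toFun := fun f : F ⟶ G => f.hom
      map_zero' := rfl
      map_add' := fun _ _ => rfl }
    (fun _ _ h => Sheaf.hom_ext h) (fun _ _ => rfl)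

instance : HasExt.{1} (RealSheafCat k) := by
  letI := HasDerivedCategory.standard (RealSheafCat k)
  exact hasExt_of_hasDerivedCategory _

/-- The interval `(a, b)` with possibly infinite endpoints. -/
def Ioo' (a b : EReal) : Set ℝ := {x : ℝ | a < (x : EReal) ∧ (x : EReal) < b}

/-- The interval `[a, b)` with a possibly infinite right endpoint. -/
def Ico' (a : ℝ) (b : EReal) : Set ℝ := {x : ℝ | a ≤ x ∧ (x : EReal) < b}

/-- The interval `(a, b]` with a possibly infinite left endpoint. -/
def Ioc' (a : EReal) (b : ℝ) : Set ℝ := {x : ℝ | a < (x : EReal) ∧ x ≤ b}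

/-- Identification of sheaves on the topological space `ℝ` with objects of `RealSheafCat`. -/
def toRS (F : TopCat.Sheaf (ModuleCat.{0} k) (TopCat.of ℝ)) : RealSheafCat k := F

/-!
For open `I`, a morphism `f : k_I ⟶ k_J` is determined by the section `f(1)` of `k_J` over `I`:
near a point of `I` any section of `k_I` is a constant multiple of `1`, and near a point outside
`I` it vanishes. Such a section is constant on the connected set `I ∩ J`, so evaluation at one
point of `(a, b) ∩ [c, d)` embeds `Hom(k_{(a,b)}, k_{[c,d)})` into `k`. If `c < b ≤ d`, then
`(a, b) ∩ [c, d)` is nonempty and closed in `(a, b)`, and extension by zero is a morphism hitting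
`1`. Otherwise either the intersection is empty or `d < b`, and then a nonzero constant section
would have `d ∈ (a, b) \ [c, d)` in the closure of its support.
-/

open Opposite

lemma isOpen_Ioo'_ereal (a b : EReal) : IsOpen (Ioo' a b) :=
  isOpen_Ioo.preimage continuous_coe_real_ereal

lemma Ico'_eq_preimage (c : ℝ) (d : EReal) :
    Ico' c d = ((↑) : ℝ → EReal) ⁻¹' Ico (c : EReal) d := by
  ext x
  simp [Ico', EReal.coe_le_coe_iff]

lemma ordConnected_Ioo'_inter_Ico' (a b : EReal) (c : ℝ) (d : EReal) :
    (Ioo' a b ∩ Ico' c d).OrdConnected := by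
  rw [Ico'_eq_preimage]
  exact (ordConnected_Ioo.inter ordConnected_Ico).preimage_mono EReal.coe_strictMono.monotone

lemma Ioo'_inter_closure_Ico'_subset {a b d : EReal} {c : ℝ} (hbd : b ≤ d) :
    Ioo' a b ∩ closure (Ico' c d) ⊆ Ico' c d := by
  have hcl : closure (Ico' c d) ⊆ ((↑) : ℝ → EReal) ⁻¹' Icc (c : EReal) d :=
    closure_minimal (by rw [Ico'_eq_preimage]; exact preimage_mono Ico_subset_Icc_self)
      (isClosed_Icc.preimage continuous_coe_real_ereal)
  rintro x ⟨hxI, hx⟩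
  exact ⟨EReal.coe_le_coe_iff.1 (hcl hx).1, hxI.2.trans_le hbd⟩

lemma exists_mem_Ioo'_inter_Ico' {a b d : EReal} {c : ℝ} (hab : a < b) (hcb : (c : EReal) < b)
    (hbd : b ≤ d) : (Ioo' a b ∩ Ico' c d).Nonempty := by
  obtain ⟨x, hx, hxb⟩ := EReal.exists_between_coe_real (max_lt hab hcb)
  exact ⟨x, ⟨(le_max_left _ _).trans_lt hx, hxb⟩,
    EReal.coe_le_coe_iff.1 ((le_max_right _ _).trans hx.le), hxb.trans_le hbd⟩

namespace intervalSheaf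

variable {k}

lemma oneSection_mem (I : Set ℝ) : (fun _ => 1 : ↥(I ∩ I) → k) ∈ secSub k I I :=
  ⟨IsLocallyConstant.const 1, fun _ hx _ => ⟨⟨hx, hx⟩, one_ne_zero⟩⟩

def oneSection (I : Set ℝ) : secSub k I I :=
  ⟨_, oneSection_mem I⟩

section Sections

variable {I V : Set ℝ} {s : ↥(V ∩ I) → k}

lemma exists_isOpen_forall_eq_zero (hs : s ∈ secSub k I V) {x : ℝ} (hxV : x ∈ V)
    (hxI : x ∉ I) : ∃ W, IsOpen W ∧ x ∈ W ∧ ∀ y (hy : y ∈ V ∩ I), y ∈ W → s ⟨y, hy⟩ = 0 := by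
  refine ⟨(closure {y | ∃ h : y ∈ V ∩ I, s ⟨y, h⟩ ≠ 0})ᶜ, isClosed_closure.isOpen_compl,
    fun hx => ?_, fun y hy hyW => ?_⟩
  · obtain ⟨hxVI, -⟩ := hs.2 x hxV hx
    exact hxI hxVI.2
  · by_contra hne
    exact hyW (subset_closure ⟨hy, hne⟩)

lemma exists_isOpen_forall_eq (hI : IsOpen I) (hs : s ∈ secSub k I V) {x : ℝ}
    (hx : x ∈ V ∩ I) :
    ∃ W, IsOpen W ∧ x ∈ W ∧ W ⊆ I ∧ ∀ y (hy : y ∈ V ∩ I), y ∈ W → s ⟨y, hy⟩ = s ⟨x, hx⟩ := by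
  obtain ⟨U, hUo, hxU, hUc⟩ := hs.1.exists_open ⟨x, hx⟩
  obtain ⟨O, hOo, rfl⟩ := isOpen_induced_iff.mp hUo
  exact ⟨O ∩ I, hOo.inter hI, ⟨hxU, hx.2⟩, inter_subset_right,
    fun y hy hyW => hUc ⟨y, hy⟩ hyW.1⟩

lemma section_apply_eq (hconn : IsPreconnected (V ∩ I)) (hs : s ∈ secSub k I V)
    (x y : ↥(V ∩ I)) : s x = s y :=
  haveI := isPreconnected_iff_preconnectedSpace.1 hconn
  hs.1.apply_eq_of_preconnectedSpace x y

lemma section_eq_zero_of_mem_closure (hconn : IsPreconnected (V ∩ I)) {p : ℝ} (hpV : p ∈ V)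
    (hp : p ∈ closure (V ∩ I)) (hpI : p ∉ I) (hs : s ∈ secSub k I V) : s = 0 := by
  funext x
  by_contra hx
  have hsupp : V ∩ I ⊆ {y | ∃ h : y ∈ V ∩ I, s ⟨y, h⟩ ≠ 0} := fun y hy =>
    ⟨hy, by rwa [section_apply_eq hconn hs ⟨y, hy⟩ x]⟩
  obtain ⟨hpVI, -⟩ := hs.2 p hpV (closure_mono hsupp hp)
  exact hpI hpVI.2

lemma section_eval_injective (hconn : IsPreconnected (V ∩ I)) (x : ↥(V ∩ I)) :
    Function.Injective fun t : secSub k I V => t.1 x := fun t₁ t₂ h =>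
  Subtype.ext <| funext fun y => by
    rw [section_apply_eq hconn t₁.2 y x, section_apply_eq hconn t₂.2 y x]
    exact h

end Sections

variable {I J : Set ℝ}

def sectionsMap (f : intervalSheaf k I ⟶ intervalSheaf k J) (V : Opens (TopCat.of ℝ)) :
    secSub k I V.1 →ₗ[k] secSub k J V.1 :=
  (f.hom.app (op V)).hom

lemma sectionsMap_resLM (f : intervalSheaf k I ⟶ intervalSheaf k J) {V W : Opens (TopCat.of ℝ)}
    (hWV : W ≤ V) (s : secSub k I V.1) :
    sectionsMap f W (resLM k I hWV s) = resLM k J hWV (sectionsMap f V s) :=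
  LinearMap.congr_fun (congrArg ModuleCat.Hom.hom (f.hom.naturality (homOfLE hWV).op)) s

lemma sectionsMap_apply_of_not_mem (f : intervalSheaf k I ⟶ intervalSheaf k J)
    (V : Opens (TopCat.of ℝ)) (s : secSub k I V.1) {x : ℝ} (hx : x ∈ V.1 ∩ J) (hxI : x ∉ I) :
    (sectionsMap f V s).1 ⟨x, hx⟩ = 0 := by
  obtain ⟨W, hWo, hxW, hW⟩ := exists_isOpen_forall_eq_zero s.2 hx.1 hxI
  let W' : Opens (TopCat.of ℝ) := ⟨V.1 ∩ W, V.2.inter hWo⟩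
  have hWV : W' ≤ V := inter_subset_left
  have hres : resLM k I hWV s = 0 := Subtype.ext <| funext fun y => hW _ _ y.2.1.2
  have h := congrArg (fun t => t.1 ⟨x, ⟨hx.1, hxW⟩, hx.2⟩) (sectionsMap_resLM f hWV s)
  rw [hres, map_zero] at h
  exact h.symm

lemma sectionsMap_apply_of_mem (hI : IsOpen I) (f : intervalSheaf k I ⟶ intervalSheaf k J)
    (V : Opens (TopCat.of ℝ)) (s : secSub k I V.1) {x : ℝ} (hx : x ∈ V.1 ∩ J) (hxI : x ∈ I) :
    (sectionsMap f V s).1 ⟨x, hx⟩ =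
      s.1 ⟨x, hx.1, hxI⟩ * (sectionsMap f ⟨I, hI⟩ (oneSection I)).1 ⟨x, hxI, hx.2⟩ := by
  obtain ⟨W, hWo, hxW, hWI, hW⟩ := exists_isOpen_forall_eq hI s.2 ⟨hx.1, hxI⟩
  let W' : Opens (TopCat.of ℝ) := ⟨V.1 ∩ W, V.2.inter hWo⟩
  have hWV : W' ≤ V := inter_subset_left
  have hWI' : W' ≤ ⟨I, hI⟩ := fun y hy => hWI hy.2
  have hres : resLM k I hWV s = s.1 ⟨x, hx.1, hxI⟩ • resLM k I hWI' (oneSection I) :=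
    Subtype.ext <| funext fun y => (hW _ _ y.2.1.2).trans (mul_one _).symm
  have h := congrArg (fun t => t.1 ⟨x, ⟨hx.1, hxW⟩, hx.2⟩) (sectionsMap_resLM f hWV s)
  rw [hres, map_smul, sectionsMap_resLM] at h
  exact h.symm

def homToSections (hI : IsOpen I) (J : Set ℝ) :
    (intervalSheaf k I ⟶ intervalSheaf k J) →ₗ[k] secSub k J I where
  toFun f := sectionsMap f ⟨I, hI⟩ (oneSection I)
  map_add' _ _ := rfl
  map_smul' _ _ := rfl

theorem homToSections_injective (hI : IsOpen I) :
    Function.Injective (homToSections (k := k) hI J) := by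
  refine (injective_iff_map_eq_zero _).2 fun f hf => ?_
  apply Sheaf.hom_ext
  ext V s
  refine Subtype.ext (funext fun x => ?_)
  change (sectionsMap f V.unop s).1 x = 0
  by_cases hxI : x.1 ∈ I
  · rw [sectionsMap_apply_of_mem hI f V.unop s x.2 hxI]
    exact mul_eq_zero_of_right _ (congrFun (congrArg Subtype.val hf) ⟨x.1, hxI, x.2.2⟩)
  · exact sectionsMap_apply_of_not_mem f V.unop s x.2 hxI

open Classical in
def extendByZero (I J V : Set ℝ) (s : ↥(V ∩ I) → k) : ↥(V ∩ J) → k :=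
  fun y => if h : y.1 ∈ I then s ⟨y.1, y.2.1, h⟩ else 0

lemma extendByZero_of_mem {V : Set ℝ} (s : ↥(V ∩ I) → k) {y : ↥(V ∩ J)} (h : y.1 ∈ I) :
    extendByZero I J V s y = s ⟨y.1, y.2.1, h⟩ :=
  dif_pos h

lemma extendByZero_of_not_mem {V : Set ℝ} (s : ↥(V ∩ I) → k) {y : ↥(V ∩ J)} (h : y.1 ∉ I) :
    extendByZero I J V s y = 0 :=
  dif_neg h

lemma isLocallyConstant_extendByZero (hI : IsOpen I) {V : Set ℝ} {s : ↥(V ∩ I) → k}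
    (hs : s ∈ secSub k I V) : IsLocallyConstant (extendByZero I J V s) := by
  refine IsLocallyConstant.iff_exists_open _ |>.2 fun x => ?_
  by_cases hxI : x.1 ∈ I
  · obtain ⟨W, hWo, hxW, hWI, hW⟩ := exists_isOpen_forall_eq hI hs ⟨x.2.1, hxI⟩
    refine ⟨Subtype.val ⁻¹' W, hWo.preimage continuous_subtype_val, hxW, fun y hy => ?_⟩
    rw [extendByZero_of_mem s (hWI hy), extendByZero_of_mem s hxI]
    exact hW _ _ hy
  · obtain ⟨W, hWo, hxW, hW⟩ := exists_isOpen_forall_eq_zero hs x.2.1 hxI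
    refine ⟨Subtype.val ⁻¹' W, hWo.preimage continuous_subtype_val, hxW, fun y hy => ?_⟩
    rw [extendByZero_of_not_mem s hxI]
    by_cases hyI : y.1 ∈ I
    · rw [extendByZero_of_mem s hyI]
      exact hW _ _ hy
    · exact extendByZero_of_not_mem s hyI

/-- Without `I ∩ closure J ⊆ J`, the support of the extension by zero could accumulate at a point
of `I ∩ closure J \ J`. -/
lemma extendByZero_mem (hI : IsOpen I) (hIJ : I ∩ closure J ⊆ J) {V : Set ℝ}
    {s : ↥(V ∩ I) → k} (hs : s ∈ secSub k I V) : extendByZero I J V s ∈ secSub k J V := by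
  refine ⟨isLocallyConstant_extendByZero hI hs, fun x hxV hx => ?_⟩
  have hsupp : {y | ∃ h : y ∈ V ∩ J, extendByZero I J V s ⟨y, h⟩ ≠ 0} ⊆
      {y | ∃ h : y ∈ V ∩ I, s ⟨y, h⟩ ≠ 0} ∩ J := by
    rintro y ⟨hy, hne⟩
    by_cases hyI : y ∈ I
    · rw [extendByZero_of_mem s hyI] at hne
      exact ⟨⟨⟨hy.1, hyI⟩, hne⟩, hy.2⟩
    · exact absurd (extendByZero_of_not_mem s hyI) hne
  have hx' := closure_mono hsupp hx
  obtain ⟨hxVI, hsx⟩ := hs.2 x hxV (closure_mono inter_subset_left hx')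
  have hxJ : x ∈ J := hIJ ⟨hxVI.2, closure_mono inter_subset_right hx'⟩
  refine ⟨⟨hxV, hxJ⟩, ?_⟩
  rwa [extendByZero_of_mem s hxVI.2]

def extendByZeroLM (hI : IsOpen I) (hIJ : I ∩ closure J ⊆ J) (V : Set ℝ) :
    secSub k I V →ₗ[k] secSub k J V where
  toFun s := ⟨extendByZero I J V s, extendByZero_mem hI hIJ s.2⟩
  map_add' s t := Subtype.ext <| funext fun y => by
    by_cases hyI : y.1 ∈ I
    · simp only [extendByZero_of_mem _ hyI, Submodule.coe_add, Pi.add_apply]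
    · simp only [extendByZero_of_not_mem _ hyI, Submodule.coe_add, Pi.add_apply, add_zero]
  map_smul' c s := Subtype.ext <| funext fun y => by
    by_cases hyI : y.1 ∈ I
    · simp only [extendByZero_of_mem _ hyI, Submodule.coe_smul, Pi.smul_apply, RingHom.id_apply]
    · simp only [extendByZero_of_not_mem _ hyI, Submodule.coe_smul, Pi.smul_apply,
        RingHom.id_apply, smul_zero]

def extendByZeroHom (hI : IsOpen I) (hIJ : I ∩ closure J ⊆ J) :
    intervalSheaf k I ⟶ intervalSheaf k J :=
  ⟨{ app V := ModuleCat.ofHom (extendByZeroLM hI hIJ V.unop.1)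
     naturality _ _ _ := rfl }⟩

lemma homToSections_extendByZeroHom_apply (hI : IsOpen I) (hIJ : I ∩ closure J ⊆ J) {x : ℝ}
    (hx : x ∈ I ∩ J) : (homToSections hI J (extendByZeroHom (k := k) hI hIJ)).1 ⟨x, hx⟩ = 1 :=
  extendByZero_of_mem _ hx.1

theorem rank_hom_eq_one (hI : IsOpen I) (hconn : IsPreconnected (I ∩ J))
    (hIJ : I ∩ closure J ⊆ J) {x₀ : ℝ} (hx₀ : x₀ ∈ I ∩ J) :
    Module.rank k (intervalSheaf k I ⟶ intervalSheaf k J) = 1 := by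
  let φ := (LinearMap.proj ⟨x₀, hx₀⟩ ∘ₗ (secSub k J I).subtype) ∘ₗ homToSections hI J
  have hinj : Function.Injective φ :=
    (section_eval_injective hconn ⟨x₀, hx₀⟩).comp (homToSections_injective hI)
  have hφ : φ (extendByZeroHom hI hIJ) = 1 := homToSections_extendByZeroHom_apply hI hIJ hx₀
  have hsurj : Function.Surjective φ := fun μ =>
    ⟨μ • extendByZeroHom hI hIJ, by rw [map_smul, hφ, smul_eq_mul, mul_one]⟩
  rw [(LinearEquiv.ofBijective φ ⟨hinj, hsurj⟩).rank_eq, Module.rank_self]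

lemma sections_Ico'_eq_zero {a b d : EReal} {c : ℝ} (h : ¬ ((c : EReal) < b ∧ b ≤ d))
    (t : secSub k (Ico' c d) (Ioo' a b)) : t = 0 := by
  refine Subtype.ext (funext fun x => ?_)
  obtain ⟨⟨hax, hxb⟩, hcx, hxd⟩ := x.2
  have hdb : d < b := not_le.1 fun hbd => h ⟨(EReal.coe_le_coe_iff.2 hcx).trans_lt hxb, hbd⟩
  lift d to ℝ using ⟨(hdb.trans_le le_top).ne, (hxd.trans_le' bot_le).ne'⟩
  have hxd' : x.1 < d := EReal.coe_lt_coe_iff.1 hxd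
  have hIco : Ico x.1 d ⊆ Ioo' a b ∩ Ico' c d := fun y hy =>
    ⟨⟨hax.trans_le (EReal.coe_le_coe_iff.2 hy.1), (EReal.coe_lt_coe_iff.2 hy.2).trans hdb⟩,
      hcx.trans hy.1, EReal.coe_lt_coe_iff.2 hy.2⟩
  have hd_cl : d ∈ closure (Ioo' a b ∩ Ico' c d) :=
    closure_mono hIco (by rw [closure_Ico hxd'.ne]; exact right_mem_Icc.2 hxd'.le)
  exact congrFun (section_eq_zero_of_mem_closure
    (ordConnected_Ioo'_inter_Ico' a b c d).isPreconnected ⟨hax.trans hxd, hdb⟩ hd_cl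
    (fun hd => lt_irrefl _ hd.2) t.2) x

end intervalSheaf

theorem hom_open_ico_general (k : Type) [Field k] (a b : EReal) (hab : a < b)
    (c : ℝ) (d : EReal) :
    (((c : EReal) < b ∧ b ≤ d) →
      Module.rank k (intervalSheaf k (Ioo' a b) ⟶ intervalSheaf k (Ico' c d)) = 1) ∧
    (¬ ((c : EReal) < b ∧ b ≤ d) →
      ∀ f : intervalSheaf k (Ioo' a b) ⟶ intervalSheaf k (Ico' c d), f = 0) := by
  refine ⟨fun ⟨hcb, hbd⟩ => ?_, fun h f => ?_⟩
  · obtain ⟨x₀, hx₀⟩ := exists_mem_Ioo'_inter_Ico' hab hcb hbd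
    exact intervalSheaf.rank_hom_eq_one (isOpen_Ioo'_ereal a b)
      (ordConnected_Ioo'_inter_Ico' a b c d).isPreconnected (Ioo'_inter_closure_Ico'_subset hbd)
      hx₀
  · refine intervalSheaf.homToSections_injective (isOpen_Ioo'_ereal a b) ?_
    rw [map_zero]
    exact intervalSheaf.sections_Ico'_eq_zero h _

/-- For `a ∈ ℝ ∪ {−∞}`, `b, d ∈ ℝ ∪ {+∞}`, `c ∈ ℝ`, with `a < b` and `c < d`,
the space `Hom(k_{(a,b)}, k_{[c,d)})` is one-dimensional over `k` if `c < b ≤ d`,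
and is zero otherwise. -/
theorem hom_open_ico (k : Type) [Field k] (a b : EReal) (hab : a < b)
    (c : ℝ) (d : EReal) (hcd : (c : EReal) < d) :
    (((c : EReal) < b ∧ b ≤ d) →
      Module.rank k (intervalSheaf k (Ioo' a b) ⟶ intervalSheaf k (Ico' c d)) = 1) ∧
    (¬ ((c : EReal) < b ∧ b ≤ d) →
      ∀ f : intervalSheaf k (Ioo' a b) ⟶ intervalSheaf k (Ico' c d), f = 0) :=
  hom_open_ico_general k a b hab c d
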